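/- (Corollary 4.8.) Suppose the convex feasibility problem has no solution (f(x) > 0 for all x ∈ ℝⁿ) and the envelope f is strictly convex. Let {x^k} be any sequence generated by Algorithm 3.1 (for arbitrary M > 0 and x⁰). If the series Σ_{k=0}^∞ ‖x^k − x^{k+1}‖ converges, then f has a unique global minimizer, the sequence {x^k} converges to that minimizer, and f(x^k) → inf{f(x) : x ∈ ℝⁿ}. -/

import Mathlib

open Filter Topology

noncomputable section

abbrev Euc (n : ℕ) := EuclideanSpace ℝ (Fin n)

/-- `ξ` is a subgradient of `g` at `x`. -/
def IsSubgradAt {n : ℕ} (g : Euc n → ℝ) (x ξ : Euc n) : Prop :=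
  ∀ y : Euc n, g x + (inner ℝ ξ (y - x) : ℝ) ≤ g y

/-- The envelope `f(x) = max_i f_i(x)` of finitely many functions. -/
def envl {n m : ℕ} [NeZero m] (f : Fin m → Euc n → ℝ) (x : Euc n) : ℝ :=
  Finset.univ.sup' Finset.univ_nonempty fun i => f i x

/-- The sequence `x` with relaxation parameters `lam` is generated by Algorithm 3.1
with data `M` for the family `f`. -/
def IsAlgSeq {n m : ℕ} [NeZero m] (f : Fin m → Euc n → ℝ) (M : ℝ)
    (x : ℕ → Euc n) (lam : ℕ → ℝ) : Prop :=
  ∀ k : ℕ, 0 ≤ lam k ∧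
    max 0 (envl f (x k)) ≤ lam k * M ^ 2 ∧
    lam k * M ^ 2 ≤ 2 * max 0 (envl f (x k)) ∧
    ∃ (w : Fin m → ℝ) (ξ : Fin m → Euc n),
      (∀ i, 0 ≤ w i) ∧ (∑ i, w i) = 1 ∧
      (∀ i, f i (x k) < envl f (x k) → w i = 0) ∧
      (∀ i, IsSubgradAt (f i) (x k) (ξ i)) ∧
      x (k + 1) = x k - lam k • ∑ i, w i • ξ i

/-!
Each step of Algorithm 3.1 moves along a convex combination `ν^k` of active subgradients, which
is a subgradient of the envelope at `x^k`, with `‖x^k - x^{k+1}‖ = λ_k ‖ν^k‖` and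
`λ_k M² ≥ f(x^k)`. Summability of the steps makes `{x^k}` Cauchy, so it has a limit `x*`, and
since `f(x*) > 0` the step sizes `λ_k` stay bounded away from zero; hence `ν^k → 0`. Passing to
the limit in `f(x^k) + ⟨ν^k, y - x^k⟩ ≤ f(y)` shows that `x*` minimizes `f`, and strict convexity
makes the minimizer unique.
-/

theorem tendsto_zero_of_mul_tendsto_zero {α : Type*} {l : Filter α} {a b : α → ℝ} {c : ℝ}
    (hc : 0 < c) (ha : ∀ᶠ k in l, c ≤ a k) (hb : ∀ k, 0 ≤ b k)
    (hab : Tendsto (fun k => a k * b k) l (𝓝 0)) : Tendsto b l (𝓝 0) := by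
  refine squeeze_zero' (Eventually.of_forall hb) ?_ (by simpa using hab.div_const c)
  filter_upwards [ha] with k hk
  rw [le_div_iff₀ hc, mul_comm]
  exact mul_le_mul_of_nonneg_right hk (hb k)

theorem le_of_tendsto_isSubgradAt {n : ℕ} {α : Type*} {l : Filter α} [l.NeBot]
    {g : Euc n → ℝ} {x ν : α → Euc n} {xs : Euc n}
    (hsub : ∀ k, IsSubgradAt g (x k) (ν k)) (hx : Tendsto x l (𝓝 xs))
    (hν : Tendsto ν l (𝓝 0)) (hg : ContinuousAt g xs) (y : Euc n) : g xs ≤ g y := by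
  have hlim : Tendsto (fun k => g (x k) + inner ℝ (ν k) (y - x k)) l (𝓝 (g xs)) := by
    simpa using (hg.tendsto.comp hx).add (hν.inner (tendsto_const_nhds.sub hx))
  exact le_of_tendsto hlim (Eventually.of_forall fun k => hsub k y)

section Envelope

theorem le_envl {n m : ℕ} [NeZero m] (f : Fin m → Euc n → ℝ) (i : Fin m) (y : Euc n) :
    f i y ≤ envl f y :=
  Finset.le_sup' (fun i => f i y) (Finset.mem_univ i)

variable {n m : ℕ} [NeZero m] {f : Fin m → Euc n → ℝ}

theorem isSubgradAt_envl_sum {x : Euc n} {w : Fin m → ℝ} {ξ : Fin m → Euc n}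
    (hw0 : ∀ i, 0 ≤ w i) (hw1 : ∑ i, w i = 1) (hact : ∀ i, f i x < envl f x → w i = 0)
    (hξ : ∀ i, IsSubgradAt (f i) x (ξ i)) : IsSubgradAt (envl f) x (∑ i, w i • ξ i) := by
  intro y
  have hterm : ∀ i, w i * (envl f x + inner ℝ (ξ i) (y - x)) ≤ w i * envl f y := by
    intro i
    rcases (le_envl f i x).lt_or_eq with hlt | heq
    · simp [hact i hlt]
    · refine mul_le_mul_of_nonneg_left ?_ (hw0 i)
      calc envl f x + inner ℝ (ξ i) (y - x) = f i x + inner ℝ (ξ i) (y - x) := by rw [heq]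
        _ ≤ f i y := hξ i y
        _ ≤ envl f y := le_envl f i y
  calc envl f x + inner ℝ (∑ i, w i • ξ i) (y - x)
      = ∑ i, w i * (envl f x + inner ℝ (ξ i) (y - x)) := by
        simp only [sum_inner, real_inner_smul_left, mul_add, Finset.sum_add_distrib,
          ← Finset.sum_mul, hw1, one_mul]
    _ ≤ ∑ i, w i * envl f y := Finset.sum_le_sum fun i _ => hterm i
    _ = envl f y := by rw [← Finset.sum_mul, hw1, one_mul]

variable {M : ℝ} {x : ℕ → Euc n} {lam : ℕ → ℝ}

theorem IsAlgSeq.exists_isSubgradAt_step (halg : IsAlgSeq f M x lam) :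
    ∃ ν : ℕ → Euc n, ∀ k, IsSubgradAt (envl f) (x k) (ν k) ∧ x k - x (k + 1) = lam k • ν k := by
  choose _ _ _ w ξ hw0 hw1 hact hξ hstep using halg
  exact ⟨fun k => ∑ i, w k i • ξ k i, fun k =>
    ⟨isSubgradAt_envl_sum (hw0 k) (hw1 k) (hact k) (hξ k), by rw [hstep k]; abel⟩⟩

theorem IsAlgSeq.envl_le_of_tendsto (halg : IsAlgSeq f M x lam) {xs : Euc n}
    (hx : Tendsto x atTop (𝓝 xs)) (hpos : 0 < envl f xs) (hcont : ContinuousAt (envl f) xs)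
    (y : Euc n) : envl f xs ≤ envl f y := by
  obtain ⟨ν, hν_step⟩ := halg.exists_isSubgradAt_step
  have hfx : Tendsto (fun k => envl f (x k)) atTop (𝓝 (envl f xs)) := hcont.tendsto.comp hx
  have hsteps : Tendsto (fun k => M ^ 2 * ‖x k - x (k + 1)‖) atTop (𝓝 0) := by
    have h := (hx.sub (hx.comp (tendsto_add_atTop_nat 1))).norm.const_mul (M ^ 2)
    simpa using h
  have hlam : ∀ᶠ k in atTop, envl f xs / 2 ≤ lam k * M ^ 2 := by
    filter_upwards [hfx.eventually (eventually_gt_nhds (half_lt_self hpos))] with k hk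
    exact hk.le.trans ((le_max_right _ _).trans (halg k).2.1)
  have hν : Tendsto ν atTop (𝓝 0) := by
    rw [tendsto_zero_iff_norm_tendsto_zero]
    refine tendsto_zero_of_mul_tendsto_zero (half_pos hpos) hlam (fun k => norm_nonneg _)
      (hsteps.congr fun k => ?_)
    rw [(hν_step k).2, norm_smul, Real.norm_eq_abs, abs_of_nonneg (halg k).1]
    ring
  exact le_of_tendsto_isSubgradAt (fun k => (hν_step k).1) hx hν hcont y

end Envelope

theorem stmt11_general
    {n m : ℕ} [NeZero m] (f : Fin m → Euc n → ℝ)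
    (M : ℝ) (x : ℕ → Euc n) (lam : ℕ → ℝ)
    (halg : IsAlgSeq f M x lam)
    (hnosol : ∀ y : Euc n, 0 < envl f y)
    (hstrict : StrictConvexOn ℝ Set.univ (envl f))
    (hsum : Summable fun k => ‖x k - x (k + 1)‖) :
    ∃ xs : Euc n, (∀ y : Euc n, envl f xs ≤ envl f y) ∧
      (∀ y : Euc n, (∀ z : Euc n, envl f y ≤ envl f z) → y = xs) ∧
      Tendsto x atTop (𝓝 xs) ∧
      Tendsto (fun k => envl f (x k)) atTop (𝓝 (⨅ y : Euc n, envl f y)) := by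
  obtain ⟨xs, hxs⟩ := cauchySeq_tendsto_of_complete
    (cauchySeq_of_summable_dist (f := x) (by simpa only [dist_eq_norm] using hsum))
  have hcont : ContinuousAt (envl f) xs :=
    (hstrict.convexOn.continuousOn isOpen_univ).continuousAt Filter.univ_mem
  have hmin : ∀ y, envl f xs ≤ envl f y := halg.envl_le_of_tendsto hxs (hnosol xs) hcont
  have hinf : (⨅ y : Euc n, envl f y) = envl f xs :=
    IsGLB.ciInf_eq (IsLeast.isGLB ⟨Set.mem_range_self xs, Set.forall_mem_range.2 hmin⟩)
  refine ⟨xs, hmin, fun y hy => ?_, hxs, hinf ▸ hcont.tendsto.comp hxs⟩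
  exact hstrict.eq_of_isMinOn (isMinOn_univ_iff.2 hy) (isMinOn_univ_iff.2 hmin) trivial trivial

theorem stmt11
    {n m : ℕ} (hn : 0 < n) [NeZero m] (f : Fin m → Euc n → ℝ)
    (hconv : ∀ i, ConvexOn ℝ Set.univ (f i))
    (M : ℝ) (hM : 0 < M) (x : ℕ → Euc n) (lam : ℕ → ℝ)
    (halg : IsAlgSeq f M x lam) (x0 : Euc n) (hx0 : x 0 = x0)
    (hnosol : ∀ y : Euc n, 0 < envl f y)
    (hstrict : StrictConvexOn ℝ Set.univ (envl f))
    (hsum : Summable fun k => ‖x k - x (k + 1)‖) :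
    ∃ xs : Euc n, (∀ y : Euc n, envl f xs ≤ envl f y) ∧
      (∀ y : Euc n, (∀ z : Euc n, envl f y ≤ envl f z) → y = xs) ∧
      Tendsto x atTop (𝓝 xs) ∧
      Tendsto (fun k => envl f (x k)) atTop (𝓝 (⨅ y : Euc n, envl f y)) :=
  stmt11_general f M x lam halg hnosol hstrict hsum
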